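/- arXiv:1602.03198 — 2 statements merged into one kernel-verified Lean document; each statement's English description precedes it below -/
import Mathlib

section
/- The infinite series ∑_{n=1}^∞ H_n / n³ equals (5/4)ζ(4). -/
/-- Generalized harmonic number `H_n^{(r)} = ∑_{j=1}^n 1/j^r`. -/
noncomputable def H (n r : ℕ) : ℝ := ∑ j ∈ Finset.range n, (1 : ℝ) / (j + 1) ^ r

/-- Riemann zeta value `ζ(s) = ∑_{n=1}^∞ 1/n^s` (as a real series). -/
noncomputable def Z (s : ℕ) : ℝ := ∑' n : ℕ, (1 : ℝ) / (n + 1) ^ s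

/-- Double zeta value `ζ(a,b) = ∑_{m>n≥1} 1/(m^a n^b)`. -/
noncomputable def Z2 (a b : ℕ) : ℝ :=
  ∑' m : ℕ, (∑ j ∈ Finset.range m, (1 : ℝ) / (j + 1) ^ b) / (m + 1) ^ a

open Real Filter

lemma H_nonneg (n : ℕ) : 0 ≤ H n 1 :=
  Finset.sum_nonneg fun j _ => by positivity

lemma H_diff (M K : ℕ) : H (M + K) 1 - H K 1 = ∑ k ∈ Finset.range M, (1:ℝ)/((k:ℝ) + K + 1) := by
  have h1 : H (M + K) 1 = H K 1 + ∑ j ∈ Finset.Ico K (M + K), (1:ℝ)/((j:ℝ)+1)^1 := by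
    rw [H, H, Finset.range_eq_Ico, Finset.range_eq_Ico]
    exact (Finset.sum_Ico_consecutive (fun j : ℕ => (1:ℝ)/((j:ℝ)+1)^1) (Nat.zero_le K) (Nat.le_add_left K M)).symm
  rw [h1, Finset.sum_Ico_eq_sum_range]
  simp only [add_sub_cancel_left, Nat.add_sub_cancel]
  apply Finset.sum_congr rfl
  intro k _
  push_cast
  ring

lemma tele (m : ℕ) :
    HasSum (fun k : ℕ => (1:ℝ)/(((k:ℝ)+1)*((k:ℝ)+(m:ℝ)+2))) (H (m+1) 1 / ((m:ℝ)+1)) := by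
  have hKm : ((m+1 : ℕ):ℝ) = (m:ℝ)+1 := by push_cast; ring
  rw [hasSum_iff_tendsto_nat_of_nonneg (fun i => by positivity)]
  have key : ∀ M : ℕ, ∑ k ∈ Finset.range M, (1:ℝ)/(((k:ℝ)+1)*((k:ℝ)+(m:ℝ)+2))
      = (H M 1 - (H (M + (m+1)) 1 - H (m+1) 1)) / ((m:ℝ)+1) := by
    intro M
    have hpt : ∀ k : ℕ, (1:ℝ)/(((k:ℝ)+1)*((k:ℝ)+(m:ℝ)+2))
        = ((1:ℝ)/((k:ℝ)+1) - 1/((k:ℝ)+((m+1:ℕ):ℝ)+1)) / ((m:ℝ)+1) := by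
      intro k
      rw [hKm]
      have h1 : ((k:ℝ)+1) ≠ 0 := by positivity
      have h2 : ((k:ℝ)+(m:ℝ)+2) ≠ 0 := by positivity
      have h3 : ((m:ℝ)+1) ≠ 0 := by positivity
      field_simp
      ring
    simp_rw [hpt, ← Finset.sum_div, Finset.sum_sub_distrib]
    rw [H_diff M (m+1)]
    congr 2
    simp [H]
  simp_rw [key]
  have hlim : Tendsto (fun M : ℕ => H M 1 - H (M + (m+1)) 1) atTop (nhds 0) := by
    apply squeeze_zero_norm (a := fun M : ℕ => ((m:ℝ)+1) * (1/((M:ℝ)+1)))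
    · intro M
      have hd : H (M + (m+1)) 1 - H M 1 = ∑ k ∈ Finset.range (m+1), (1:ℝ)/((k:ℝ) + M + 1) := by
        have := H_diff (m+1) M
        rw [Nat.add_comm (m+1) M] at this
        exact this
      have hnn : 0 ≤ H (M + (m+1)) 1 - H M 1 := by
        rw [hd]; exact Finset.sum_nonneg fun k _ => by positivity
      rw [Real.norm_eq_abs, abs_sub_comm, abs_of_nonneg hnn, hd]
      calc ∑ k ∈ Finset.range (m+1), (1:ℝ)/((k:ℝ) + M + 1)
          ≤ ∑ k ∈ Finset.range (m+1), (1:ℝ)/((M:ℝ)+1) := by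
            apply Finset.sum_le_sum
            intro k _
            apply div_le_div_of_nonneg_left (by norm_num) (by positivity)
            push_cast; linarith [Nat.cast_nonneg (α := ℝ) k]
        _ = ((m:ℝ)+1) * (1/((M:ℝ)+1)) := by
            rw [Finset.sum_const, Finset.card_range]; push_cast; ring
    · have := tendsto_one_div_add_atTop_nhds_zero_nat.const_mul ((m:ℝ)+1)
      simpa using this
  have hfin : Tendsto (fun M : ℕ => (H M 1 - (H (M + (m+1)) 1 - H (m+1) 1)) / ((m:ℝ)+1)) atTop
      (nhds ((0 + H (m+1) 1) / ((m:ℝ)+1))) := by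
    apply Tendsto.div_const
    have : (fun M : ℕ => H M 1 - (H (M + (m+1)) 1 - H (m+1) 1))
        = fun M : ℕ => (H M 1 - H (M + (m+1)) 1) + H (m+1) 1 := by funext M; ring
    rw [this]
    exact hlim.add tendsto_const_nhds
  simpa using hfin

lemma shift1 {f : ℕ → ℝ} {a : ℝ} (hf : HasSum f a) (h0 : f 0 = 0) :
    HasSum (fun n => f (n + 1)) a := by
  have := (hasSum_nat_add_iff' 1).2 hf
  simpa [h0] using this

lemma hz2 : HasSum (fun n : ℕ => (1:ℝ)/((n:ℝ)+1)^2) (π^2/6) := by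
  have := shift1 hasSum_zeta_two (by norm_num)
  have heq : (fun n : ℕ => (1:ℝ)/((n+1:ℕ):ℝ)^2) = fun n : ℕ => (1:ℝ)/((n:ℝ)+1)^2 := by
    funext n; push_cast; ring
  rwa [heq] at this

lemma hz4 : HasSum (fun n : ℕ => (1:ℝ)/((n:ℝ)+1)^4) (π^4/90) := by
  have := shift1 hasSum_zeta_four (by norm_num)
  have heq : (fun n : ℕ => (1:ℝ)/((n+1:ℕ):ℝ)^4) = fun n : ℕ => (1:ℝ)/((n:ℝ)+1)^4 := by
    funext n; push_cast; ring
  rwa [heq] at this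

open ENNReal in
lemma key_sum : Summable (fun n : ℕ => H (n+1) 1 / ((n:ℝ)+1)^3) ∧
    ∑' n : ℕ, H (n+1) 1 / ((n:ℝ)+1)^3 = π^4/72 := by
  -- ENNReal-valued pieces on ℕ × ℕ
  set F1 : ℕ × ℕ → ℝ≥0∞ := fun p => ENNReal.ofReal
    (1/(((p.1:ℝ)+1)^2*((p.2:ℝ)+1)^2)) with hF1
  set F2 : ℕ × ℕ → ℝ≥0∞ := fun p => ENNReal.ofReal
    (1/(((p.1:ℝ)+1)^2*((p.1:ℝ)+(p.2:ℝ)+2)^2)) with hF2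
  set F3 : ℕ × ℕ → ℝ≥0∞ := fun p => ENNReal.ofReal
    (1/(((p.2:ℝ)+1)^2*((p.1:ℝ)+(p.2:ℝ)+2)^2)) with hF3
  set F4 : ℕ × ℕ → ℝ≥0∞ := fun p => ENNReal.ofReal
    (1/(((p.1:ℝ)+1)^2*(((p.2:ℝ)+1)*((p.1:ℝ)+(p.2:ℝ)+2)))) with hF4
  -- pointwise identity : F1 + F2 = F3 + 2 * F4
  have hpt : ∀ p : ℕ × ℕ, F1 p + F2 p = F3 p + 2 * F4 p := by
    rintro ⟨x, y⟩
    have ha : (0:ℝ) < (x:ℝ)+1 := by positivity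
    have hb : (0:ℝ) < (y:ℝ)+1 := by positivity
    have hs : (0:ℝ) < (x:ℝ)+(y:ℝ)+2 := by positivity
    simp only [hF1, hF2, hF3, hF4]
    rw [← ENNReal.ofReal_add (by positivity) (by positivity),
      ← ENNReal.ofReal_ofNat 2, ← ENNReal.ofReal_mul (by norm_num),
      ← ENNReal.ofReal_add (by positivity) (by positivity)]
    congr 1
    field_simp
    ring
  have hsum_eq : ∑' p, F1 p + ∑' p, F2 p = ∑' p, F3 p + 2 * ∑' p, F4 p := by
    rw [← ENNReal.tsum_add, ← ENNReal.tsum_mul_left, ← ENNReal.tsum_add]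
    exact tsum_congr hpt
  -- F2 and F3 have the same sum (swap coordinates)
  have hswap : ∑' p, F2 p = ∑' p, F3 p := by
    rw [← (Equiv.prodComm ℕ ℕ).tsum_eq F3]
    apply tsum_congr
    rintro ⟨x, y⟩
    simp only [hF2, hF3, Equiv.prodComm_apply, Prod.swap]
    congr 3
    ring
  -- F1 sums to z2 * z2
  set z2 : ℝ≥0∞ := ENNReal.ofReal (π^2/6) with hz2d
  have hF1sum : ∑' p, F1 p = z2 * z2 := by
    have : ∀ p : ℕ × ℕ, F1 p = ENNReal.ofReal (1/((p.1:ℝ)+1)^2) *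
        ENNReal.ofReal (1/((p.2:ℝ)+1)^2) := by
      rintro ⟨x, y⟩
      rw [hF1, ← ENNReal.ofReal_mul (by positivity)]
      congr 1
      field_simp
    rw [tsum_congr this, ENNReal.tsum_prod']
    have hz : ∑' n : ℕ, ENNReal.ofReal (1/((n:ℝ)+1)^2) = z2 := by
      rw [hz2d, ← ENNReal.ofReal_tsum_of_nonneg (fun n => by positivity) hz2.summable,
        hz2.tsum_eq]
    calc ∑' (x : ℕ) (y : ℕ), ENNReal.ofReal (1/((x:ℝ)+1)^2) * ENNReal.ofReal (1/((y:ℝ)+1)^2)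
        = ∑' (x : ℕ), ENNReal.ofReal (1/((x:ℝ)+1)^2) * ∑' (y : ℕ), ENNReal.ofReal (1/((y:ℝ)+1)^2) := by
          apply tsum_congr; intro x; rw [ENNReal.tsum_mul_left]
      _ = z2 * z2 := by rw [ENNReal.tsum_mul_right, hz]
  -- F2 sum is finite
  have hF2le : ∑' p, F2 p ≤ ∑' p, F1 p := by
    apply ENNReal.tsum_le_tsum
    rintro ⟨x, y⟩
    apply ENNReal.ofReal_le_ofReal
    apply div_le_div_of_nonneg_left (by norm_num) (by positivity)
    have : ((y:ℝ)+1)^2 ≤ ((x:ℝ)+(y:ℝ)+2)^2 := by nlinarith [Nat.cast_nonneg (α := ℝ) x, Nat.cast_nonneg (α := ℝ) y]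
    nlinarith [sq_nonneg ((x:ℝ)+1)]
  have hF2fin : ∑' p, F2 p ≠ ∞ := by
    apply ne_top_of_le_ne_top _ hF2le
    rw [hF1sum]
    exact ENNReal.mul_ne_top ENNReal.ofReal_ne_top ENNReal.ofReal_ne_top
  -- cancel : ∑ F1 = 2 ∑ F4
  have hmain : ∑' p, F1 p = 2 * ∑' p, F4 p := by
    have := hsum_eq
    rw [← hswap] at this
    rw [add_comm (∑' p, F1 p) (∑' p, F2 p)] at this
    exact (ENNReal.add_right_inj hF2fin).1 this
  -- compute ∑ F4 via telescoping
  have hF4sum : ∑' p, F4 p = ∑' n : ℕ, ENNReal.ofReal (H (n+1) 1 / ((n:ℝ)+1)^3) := by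
    rw [ENNReal.tsum_prod']
    apply tsum_congr
    intro x
    have htele : HasSum (fun y : ℕ => (1:ℝ)/(((y:ℝ)+1)*((y:ℝ)+(x:ℝ)+2)) / ((x:ℝ)+1)^2)
        (H (x+1) 1 / ((x:ℝ)+1) / ((x:ℝ)+1)^2) := (tele x).div_const _
    have heq : ∀ y : ℕ, F4 (x, y)
        = ENNReal.ofReal ((1:ℝ)/(((y:ℝ)+1)*((y:ℝ)+(x:ℝ)+2)) / ((x:ℝ)+1)^2) := by
      intro y
      rw [hF4]
      congr 1
      field_simp
      ring
    rw [tsum_congr heq, ← ENNReal.ofReal_tsum_of_nonneg (fun y => by positivity) htele.summable,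
      htele.tsum_eq]
    congr 1
    rw [div_div]
    congr 1
    ring
  -- conclude
  have hval : ∑' n : ℕ, ENNReal.ofReal (H (n+1) 1 / ((n:ℝ)+1)^3) = ENNReal.ofReal (π^4/72) := by
    have h1 : (2:ℝ≥0∞) * ENNReal.ofReal (π^4/72) = z2 * z2 := by
      rw [hz2d, ← ENNReal.ofReal_mul (by positivity), ← ENNReal.ofReal_ofNat 2,
        ← ENNReal.ofReal_mul (by norm_num)]
      congr 1
      ring
    have h2 : (2:ℝ≥0∞) * ∑' p, F4 p = (2:ℝ≥0∞) * ENNReal.ofReal (π^4/72) := by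
      rw [h1, ← hF1sum, hmain]
    rw [← hF4sum]
    exact (ENNReal.mul_right_strictMono (by norm_num) (by norm_num)).injective h2
  have hfin : ∑' n : ℕ, ENNReal.ofReal (H (n+1) 1 / ((n:ℝ)+1)^3) ≠ ∞ := by
    rw [hval]; exact ENNReal.ofReal_ne_top
  have hnn : ∀ n : ℕ, 0 ≤ H (n+1) 1 / ((n:ℝ)+1)^3 := fun n =>
    div_nonneg (H_nonneg _) (by positivity)
  have hsummable : Summable (fun n : ℕ => H (n+1) 1 / ((n:ℝ)+1)^3) := by
    have := ENNReal.summable_toReal hfin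
    simpa [ENNReal.toReal_ofReal (hnn _)] using this
  refine ⟨hsummable, ?_⟩
  have : ENNReal.ofReal (∑' n : ℕ, H (n+1) 1 / ((n:ℝ)+1)^3) = ENNReal.ofReal (π^4/72) := by
    rw [ENNReal.ofReal_tsum_of_nonneg hnn hsummable, hval]
  rwa [ENNReal.ofReal_eq_ofReal_iff (tsum_nonneg hnn) (by positivity)] at this

theorem stmt1 : ∑' n : ℕ, H (n + 1) 1 / ((n : ℝ) + 1) ^ 3 = (5 / 4) * Z 4 := by
  have hZ4 : Z 4 = π^4/90 := hz4.tsum_eq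
  rw [key_sum.2, hZ4]
  ring
end

section
/- The infinite series ∑_{n=1}^∞ H_n / (n+1)² equals ζ(3). -/
open Finset

lemma sq_sum : Summable (fun n : ℕ => 1 / ((n : ℝ) + 1) ^ 2) := by
  have := (summable_nat_add_iff 1).mpr (Real.summable_one_div_nat_pow.mpr (by norm_num : 1 < 2))
  refine this.congr fun n => ?_
  push_cast
  ring

lemma cube_sum : Summable (fun n : ℕ => 1 / ((n : ℝ) + 1) ^ 3) := by
  have := (summable_nat_add_iff 1).mpr (Real.summable_one_div_nat_pow.mpr (by norm_num : 1 < 3))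
  refine this.congr fun n => ?_
  push_cast
  ring

/-- the asymmetric summand `1/(n'(n'+m')²)` with `n' = n+1`, `m' = m+1` -/
noncomputable def u (p : ℕ × ℕ) : ℝ :=
  1 / (((p.1 : ℝ) + 1) * ((p.1 : ℝ) + (p.2 : ℝ) + 2) ^ 2)

lemma u_nonneg (p : ℕ × ℕ) : 0 ≤ u p := by
  unfold u; positivity

lemma u_apply (n m : ℕ) : u (n, m) = 1 / (((n : ℝ) + 1) * ((n : ℝ) + (m : ℝ) + 2) ^ 2) := rfl

lemma u_le (n m : ℕ) : u (n, m) ≤ 1 / ((m : ℝ) + 1) ^ 2 := by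
  rw [u_apply]
  have hn : (0:ℝ) ≤ (n:ℝ) := Nat.cast_nonneg n
  have hm : (0:ℝ) ≤ (m:ℝ) := Nat.cast_nonneg m
  apply one_div_le_one_div_of_le (by positivity)
  nlinarith

lemma u_sect (n : ℕ) : Summable (fun m => u (n, m)) :=
  sq_sum.of_nonneg_of_le (fun m => u_nonneg _) (fun m => u_le n m)

lemma u_tail (n : ℕ) : ∑' m, u (n, m) ≤ 1 / ((n : ℝ) + 1) ^ 2 := by
  apply Real.tsum_le_of_sum_range_le (fun m => u_nonneg _)
  intro N
  have hn : (0:ℝ) ≤ (n:ℝ) := Nat.cast_nonneg n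
  have key : ∀ m : ℕ, u (n, m) ≤
      (1 / ((n:ℝ)+1)) * (1 / ((n:ℝ) + (m:ℝ) + 1) - 1 / ((n:ℝ) + (m:ℝ) + 2)) := by
    intro m
    have hm : (0:ℝ) ≤ (m:ℝ) := Nat.cast_nonneg m
    have e : 1 / ((n:ℝ)+(m:ℝ)+1) - 1 / ((n:ℝ)+(m:ℝ)+2)
        = 1 / (((n:ℝ)+(m:ℝ)+1) * ((n:ℝ)+(m:ℝ)+2)) := by
      rw [div_sub_div _ _ (by positivity) (by positivity)]
      congr 1
      ring
    have e2 : (1 / ((n:ℝ)+1)) * (1 / (((n:ℝ)+(m:ℝ)+1) * ((n:ℝ)+(m:ℝ)+2)))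
        = 1 / (((n:ℝ)+1) * (((n:ℝ)+(m:ℝ)+1) * ((n:ℝ)+(m:ℝ)+2))) := by
      rw [div_mul_div_comm, one_mul]
    rw [e, e2, u_apply]
    apply one_div_le_one_div_of_le (by positivity)
    nlinarith
  have tel : ∑ m ∈ range N, (1 / ((n:ℝ) + (m:ℝ) + 1) - 1 / ((n:ℝ) + (m:ℝ) + 2))
      = 1 / ((n:ℝ)+1) - 1 / ((n:ℝ) + (N:ℝ) + 1) := by
    induction N with
    | zero => norm_num
    | succ N ih =>
      rw [Finset.sum_range_succ, ih]
      push_cast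
      ring
  calc ∑ m ∈ range N, u (n, m)
      ≤ ∑ m ∈ range N, (1 / ((n:ℝ)+1)) * (1 / ((n:ℝ) + (m:ℝ) + 1) - 1 / ((n:ℝ) + (m:ℝ) + 2)) :=
        Finset.sum_le_sum fun m _ => key m
    _ = (1 / ((n:ℝ)+1)) * (1 / ((n:ℝ)+1) - 1 / ((n:ℝ) + (N:ℝ) + 1)) := by
        rw [← Finset.mul_sum, tel]
    _ ≤ (1 / ((n:ℝ)+1)) * (1 / ((n:ℝ)+1)) := by
        have hN : (0:ℝ) ≤ 1 / ((n:ℝ) + (N:ℝ) + 1) := by positivity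
        apply mul_le_mul_of_nonneg_left (by linarith) (by positivity)
    _ = 1 / ((n:ℝ)+1) ^ 2 := by
        rw [div_mul_div_comm, one_mul, sq]

lemma u_summable : Summable u := by
  rw [summable_prod_of_nonneg u_nonneg]
  exact ⟨fun n => u_sect n,
    sq_sum.of_nonneg_of_le (fun n => tsum_nonneg fun m => u_nonneg _) (fun n => u_tail n)⟩

/-- reindexed version supported on pairs `(N, j)` with `j ≤ N` -/
noncomputable def w (q : ℕ × ℕ) : ℝ :=
  if q.2 < q.1 + 1 then 1 / (((q.2 : ℝ) + 1) * ((q.1 : ℝ) + 2) ^ 2) else 0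

def e (p : ℕ × ℕ) : ℕ × ℕ := (p.1 + p.2, p.1)

lemma e_inj : Function.Injective e := by
  rintro ⟨a, b⟩ ⟨c, d⟩ hp
  simp only [e, Prod.mk.injEq] at hp
  obtain ⟨h1, h2⟩ := hp
  subst h2
  exact Prod.ext rfl (by omega)

lemma w_support : Function.support w ⊆ Set.range e := by
  rintro ⟨N, j⟩ hq
  simp only [Function.mem_support, w] at hq
  have hj : j < N + 1 := by
    by_contra hc
    simp [hc] at hq
  refine ⟨(j, N - j), ?_⟩
  simp only [e, Prod.mk.injEq]
  exact ⟨by omega, trivial⟩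

lemma w_comp_e : ∀ p, w (e p) = u p := by
  rintro ⟨n, m⟩
  simp only [w, e, u]
  simp only [show n < n + m + 1 by omega, ↓reduceIte]
  push_cast
  ring_nf

lemma w_summable : Summable w :=
  (e_inj.summable_iff (by intro x hx; by_contra hne; exact hx (w_support hne))).mp
    (u_summable.congr fun p => (w_comp_e p).symm)

lemma tsum_w_eq_u : ∑' q, w q = ∑' p, u p := by
  rw [← e_inj.tsum_eq w_support]
  exact tsum_congr w_comp_e

lemma w_inner (N : ℕ) : ∑' j, w (N, j) = H (N + 1) 1 / ((N : ℝ) + 2) ^ 2 := by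
  rw [tsum_eq_sum (s := range (N + 1)) (by
    intro j hj
    simp only [Finset.mem_range] at hj
    simp [w, hj])]
  unfold H
  rw [Finset.sum_div]
  apply Finset.sum_congr rfl
  intro j hj
  simp only [Finset.mem_range] at hj
  simp only [w]
  rw [if_pos hj, pow_one, div_div]

lemma T_summable : Summable (fun N => H (N + 1) 1 / ((N : ℝ) + 2) ^ 2) :=
  (w_summable.prod).congr fun N => w_inner N

lemma T_eq_Su : ∑' N, H (N + 1) 1 / ((N : ℝ) + 2) ^ 2 = ∑' p, u p := by
  rw [← tsum_w_eq_u, Summable.tsum_prod w_summable]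
  exact tsum_congr fun N => (w_inner N).symm

/-- the symmetric summand `1/(n'm'(n'+m'))` -/
noncomputable def v (p : ℕ × ℕ) : ℝ :=
  1 / (((p.1 : ℝ) + 1) * ((p.2 : ℝ) + 1) * ((p.1 : ℝ) + (p.2 : ℝ) + 2))

lemma v_eq (p : ℕ × ℕ) : v p = u p + u p.swap := by
  obtain ⟨n, m⟩ := p
  show v (n, m) = u (n, m) + u (m, n)
  rw [u_apply, u_apply]
  show 1 / (((n : ℝ) + 1) * ((m : ℝ) + 1) * ((n : ℝ) + (m : ℝ) + 2)) = _
  have h1 : (0:ℝ) < (n:ℝ) + 1 := by positivity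
  have h2 : (0:ℝ) < (m:ℝ) + 1 := by positivity
  have h3 : (0:ℝ) < (n:ℝ) + (m:ℝ) + 2 := by positivity
  have h4 : (0:ℝ) < (m:ℝ) + (n:ℝ) + 2 := by positivity
  field_simp
  ring

lemma u_swap_summable : Summable (fun p : ℕ × ℕ => u p.swap) :=
  (Equiv.prodComm ℕ ℕ).summable_iff.mpr u_summable

lemma v_summable : Summable v :=
  (u_summable.add u_swap_summable).congr fun p => (v_eq p).symm

lemma tsum_v : ∑' p, v p = 2 * ∑' p, u p := by
  have hswap : ∑' p : ℕ × ℕ, u p.swap = ∑' p, u p := (Equiv.prodComm ℕ ℕ).tsum_eq u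
  calc ∑' p, v p = ∑' p : ℕ × ℕ, (u p + u p.swap) := tsum_congr v_eq
    _ = (∑' p, u p) + ∑' p : ℕ × ℕ, u p.swap := Summable.tsum_add u_summable u_swap_summable
    _ = 2 * ∑' p, u p := by rw [hswap]; ring

/-- partial harmonic sums -/
noncomputable def hh (N : ℕ) : ℝ := ∑ k ∈ range N, 1 / ((k : ℝ) + 1)

lemma h_eq_H (N : ℕ) : H N 1 = hh N := by
  unfold H hh
  exact Finset.sum_congr rfl fun k _ => by rw [pow_one]

lemma h_diff (N n : ℕ) : hh (N + n) - hh N = ∑ k ∈ range n, 1 / ((N : ℝ) + (k : ℝ) + 1) := by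
  unfold hh
  rw [Finset.sum_range_add, add_sub_cancel_left]
  apply Finset.sum_congr rfl
  intro k _
  push_cast
  ring_nf

lemma v_inner (n : ℕ) :
    ∑' m, v (n, m) = H (n + 1) 1 / ((n : ℝ) + 1) ^ 2 := by
  have hs : Summable (fun m => v (n, m)) := v_summable.prod_factor n
  have ht1 := hs.hasSum.tendsto_sum_nat
  have key : ∀ N : ℕ, ∑ m ∈ range N, v (n, m)
      = (1 / ((n:ℝ)+1)^2) * (hh (n+1) - (hh (N + (n+1)) - hh N)) := by
    intro N
    have term : ∀ m : ℕ, v (n, m)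
        = (1 / ((n:ℝ)+1)^2) * (1 / ((m:ℝ)+1) - 1 / ((n:ℝ)+(m:ℝ)+2)) := by
      intro m
      show 1 / (((n : ℝ) + 1) * ((m : ℝ) + 1) * ((n : ℝ) + (m : ℝ) + 2)) = _
      have h1 : ((n:ℝ) + 1) ≠ 0 := by positivity
      have h2 : ((m:ℝ) + 1) ≠ 0 := by positivity
      have h3 : ((n:ℝ) + (m:ℝ) + 2) ≠ 0 := by positivity
      field_simp
      ring
    rw [Finset.sum_congr rfl (fun m _ => term m), ← Finset.mul_sum]
    congr 1
    rw [Finset.sum_sub_distrib]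
    have e1 : ∑ m ∈ range N, 1 / ((m:ℝ)+1) = hh N := rfl
    have e2 : ∑ m ∈ range N, 1 / ((n:ℝ)+(m:ℝ)+2) = hh ((n+1) + N) - hh (n+1) := by
      rw [h_diff]
      apply Finset.sum_congr rfl
      intro m _
      push_cast
      ring_nf
    rw [e1, e2]
    have : (n+1) + N = N + (n+1) := by omega
    rw [this]
    ring
  have hd : Filter.Tendsto (fun N => hh (N + (n+1)) - hh N) Filter.atTop (nhds 0) := by
    have hbound : ∀ N : ℕ, hh (N + (n+1)) - hh N ≤ ((n:ℝ)+1) * (1 / ((N:ℝ)+1)) := by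
      intro N
      rw [h_diff]
      calc ∑ k ∈ range (n+1), 1 / ((N : ℝ) + (k : ℝ) + 1)
          ≤ ∑ k ∈ range (n+1), 1 / ((N:ℝ)+1) := by
            apply Finset.sum_le_sum
            intro k _
            apply one_div_le_one_div_of_le (by positivity)
            have : (0:ℝ) ≤ (k:ℝ) := Nat.cast_nonneg k
            linarith
        _ = ((n:ℝ)+1) * (1 / ((N:ℝ)+1)) := by
            rw [Finset.sum_const, Finset.card_range, nsmul_eq_mul]
            push_cast
            ring
    have hpos : ∀ N : ℕ, 0 ≤ hh (N + (n+1)) - hh N := by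
      intro N
      rw [h_diff]
      apply Finset.sum_nonneg
      intro k _
      positivity
    have hlim : Filter.Tendsto (fun N : ℕ => ((n:ℝ)+1) * (1 / ((N:ℝ)+1)))
        Filter.atTop (nhds 0) := by
      simpa using tendsto_one_div_add_atTop_nhds_zero_nat.const_mul ((n:ℝ)+1)
    exact squeeze_zero hpos hbound hlim
  have ht2 : Filter.Tendsto (fun N => ∑ m ∈ range N, v (n, m)) Filter.atTop
      (nhds (H (n + 1) 1 / ((n : ℝ) + 1) ^ 2)) := by
    have lim : Filter.Tendsto (fun N => (1 / ((n:ℝ)+1)^2) * (hh (n+1) - (hh (N + (n+1)) - hh N)))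
        Filter.atTop (nhds ((1 / ((n:ℝ)+1)^2) * (hh (n+1) - 0))) :=
      ((tendsto_const_nhds.sub hd).const_mul _)
    rw [show (1 / ((n:ℝ)+1)^2) * (hh (n+1) - 0) = H (n + 1) 1 / ((n : ℝ) + 1) ^ 2 by
      rw [h_eq_H]; ring] at lim
    exact lim.congr fun N => (key N).symm
  exact tendsto_nhds_unique ht1 ht2

lemma A_summable : Summable (fun n => H (n + 1) 1 / ((n : ℝ) + 1) ^ 2) :=
  (v_summable.prod).congr fun n => v_inner n

lemma A_eq : ∑' n, H (n + 1) 1 / ((n : ℝ) + 1) ^ 2 = 2 * ∑' p, u p := by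
  rw [← tsum_v, Summable.tsum_prod v_summable]
  exact tsum_congr fun n => (v_inner n).symm

lemma cube_shift_summable : Summable (fun n : ℕ => 1 / ((n : ℝ) + 2) ^ 3) := by
  have := (summable_nat_add_iff 1).mpr cube_sum
  refine this.congr fun n => ?_
  push_cast
  ring_nf

lemma cube_tail : ∑' n : ℕ, 1 / ((n : ℝ) + 2) ^ 3 = Z 3 - 1 := by
  have hz : Z 3 = 1 / ((0:ℕ) + 1 : ℝ) ^ 3 + ∑' n : ℕ, 1 / (((n+1 : ℕ) : ℝ) + 1) ^ 3 := by
    rw [Z]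
    exact Summable.tsum_eq_zero_add cube_sum
  rw [hz]
  have : ∑' n : ℕ, 1 / (((n+1 : ℕ) : ℝ) + 1) ^ 3 = ∑' n : ℕ, 1 / ((n : ℝ) + 2) ^ 3 :=
    tsum_congr fun n => by push_cast; ring_nf
  rw [this]
  norm_num

lemma A_split : ∑' n, H (n + 1) 1 / ((n : ℝ) + 1) ^ 2
    = (∑' n : ℕ, H (n + 1) 1 / ((n : ℝ) + 2) ^ 2) + Z 3 := by
  rw [Summable.tsum_eq_zero_add A_summable]
  have h0 : H (0 + 1) 1 / ((0:ℕ) + 1 : ℝ) ^ 2 = 1 := by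
    simp [H]
  have step : ∀ n : ℕ, H ((n+1) + 1) 1 / (((n+1 : ℕ) : ℝ) + 1) ^ 2
      = H (n + 1) 1 / ((n : ℝ) + 2) ^ 2 + 1 / ((n : ℝ) + 2) ^ 3 := by
    intro n
    have hH : H (n + 2) 1 = H (n + 1) 1 + 1 / ((n:ℝ) + 2) := by
      unfold H
      rw [Finset.sum_range_succ]
      congr 1
      rw [pow_one]
      push_cast
      ring_nf
    push_cast
    rw [show (n:ℝ) + 1 + 1 = (n:ℝ) + 2 by ring, show n + 1 + 1 = n + 2 from rfl, hH, add_div]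
    congr 1
    rw [div_div]
    congr 1
    ring
  rw [h0, tsum_congr step, Summable.tsum_add T_summable cube_shift_summable, cube_tail]
  ring

theorem stmt13 : ∑' n : ℕ, H (n + 1) 1 / ((n : ℝ) + 2) ^ 2 = Z 3 := by
  have h1 : ∑' n, H (n + 1) 1 / ((n : ℝ) + 1) ^ 2
      = 2 * ∑' n : ℕ, H (n + 1) 1 / ((n : ℝ) + 2) ^ 2 := by
    rw [A_eq, ← T_eq_Su]
  have h2 := A_split
  linarith
end
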